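/- With the setup of the E-LDA objective, the function f̂(E) = f(E ∪ P) − f(P), where P consists of one placeholder link per document assigning a fixed constant value c to every word, is submodular: for all E ⊆ E' ⊆ Φ × D and any single link a = (τ, d) ∉ E', f̂(E ∪ {a}) − f̂(E) ≥ f̂(E' ∪ {a}) − f̂(E'). -/

import Mathlib

open Real

/-- E-LDA objective with a placeholder topic of constant value `c` for every
document: each word of document `d` contributes the max of `c` and the values
`φ τ w` over topics `τ` linked to `d` in `E`. -/
noncomputable def eldaObjP {V D Φ : Type*} [Fintype D] [Fintype Φ]
    (doc : D → List V) (φ : Φ → V → ℝ) (c : ℝ) (E : Finset (Φ × D)) : ℝ :=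
  ∑ d : D, ((doc d).map
    (fun w => sSup (insert c ((fun τ => φ τ w) '' {τ | (τ, d) ∈ E})))).sum

/-- The normalized objective `f̂(E) = f(E ∪ P) − f(P)`, where `P` is the set of
placeholder links (here absorbed into the definition of `eldaObjP`, with
`f(P) = eldaObjP doc φ c ∅`). -/
noncomputable def eldaObjHat {V D Φ : Type*} [Fintype D] [Fintype Φ]
    (doc : D → List V) (φ : Φ → V → ℝ) (c : ℝ) (E : Finset (Φ × D)) : ℝ :=
  eldaObjP doc φ c E - eldaObjP doc φ c ∅

/-! Each word contributes `max c (max of finitely many values)`, and the gain `max t m - m` of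
raising such a maximum by a new value `t` shrinks as the current maximum `m` grows. Summing over
words and documents gives the claim, since the constant `f(P)` cancels in marginal gains. -/

theorem max_add_le_max_add_of_le {α : Type*} [AddCommGroup α] [LinearOrder α]
    [IsOrderedAddMonoid α] (t : α) {m m' : α} (h : m ≤ m') :
    max t m' + m ≤ max t m + m' := by
  rw [← sub_le_sub_iff, ← max_sub_sub_right, ← max_sub_sub_right, sub_self, sub_self]
  gcongr

section SupInsertImage

variable {ι α : Type*} [ConditionallyCompleteLinearOrder α] (c : α) (g : ι → α)

theorem csSup_insert_image_mono {S S' : Set ι} (hS' : S'.Finite) (h : S ⊆ S') :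
    sSup (insert c (g '' S)) ≤ sSup (insert c (g '' S')) :=
  csSup_le_csSup ((hS'.image g).insert c).bddAbove (Set.insert_nonempty _ _)
    (Set.insert_subset_insert (Set.image_mono h))

theorem csSup_insert_image_insert {S : Set ι} (hS : S.Finite) (x : ι) :
    sSup (insert c (g '' insert x S)) = max (g x) (sSup (insert c (g '' S))) := by
  rw [Set.image_insert_eq, Set.insert_comm]
  exact csSup_insert ((hS.image g).insert c).bddAbove (Set.insert_nonempty _ _)

end SupInsertImage

section Links

variable {D Φ : Type*} [DecidableEq Φ] [DecidableEq D]

/-- `E_d` in the paper. -/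
def linkedTopics (E : Finset (Φ × D)) (d : D) : Set Φ := {τ | (τ, d) ∈ E}

theorem linkedTopics_insert_self (E : Finset (Φ × D)) (a : Φ × D) :
    linkedTopics (insert a E) a.2 = insert a.1 (linkedTopics E a.2) := by
  ext τ
  simp [linkedTopics, Prod.ext_iff]

theorem linkedTopics_insert_of_ne (E : Finset (Φ × D)) {a : Φ × D} {d : D} (hd : d ≠ a.2) :
    linkedTopics (insert a E) d = linkedTopics E d := by
  ext τ
  simp [linkedTopics, Prod.ext_iff, hd]

variable [Fintype Φ] {V : Type*} (φ : Φ → V → ℝ) (c : ℝ)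

theorem csSup_linkedTopics_insert_add_le {E E' : Finset (Φ × D)} (hE : E ⊆ E') (a : Φ × D) (d : D)
    (w : V) :
    sSup (insert c ((φ · w) '' linkedTopics (insert a E') d)) +
        sSup (insert c ((φ · w) '' linkedTopics E d)) ≤
      sSup (insert c ((φ · w) '' linkedTopics (insert a E) d)) +
        sSup (insert c ((φ · w) '' linkedTopics E' d)) := by
  by_cases hd : d = a.2
  · subst hd
    simp only [linkedTopics_insert_self,
      csSup_insert_image_insert c (φ · w) (Set.toFinite _)]
    exact max_add_le_max_add_of_le _ <|
      csSup_insert_image_mono c (φ · w) (Set.toFinite _) fun τ hτ => hE hτ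
  · rw [linkedTopics_insert_of_ne E' hd, linkedTopics_insert_of_ne E hd, add_comm]

variable [Fintype D] (doc : D → List V)

theorem eldaObjP_insert_add_le {E E' : Finset (Φ × D)} (hE : E ⊆ E') (a : Φ × D) :
    eldaObjP doc φ c (insert a E') + eldaObjP doc φ c E ≤
      eldaObjP doc φ c (insert a E) + eldaObjP doc φ c E' := by
  simp only [eldaObjP, ← Finset.sum_add_distrib, ← List.sum_map_add]
  gcongr with d
  exact List.sum_le_sum fun w _ => csSup_linkedTopics_insert_add_le φ c hE a d w

end Links

theorem eldaHat_submodular_general {V D Φ : Type*} [Fintype D] [Fintype Φ]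
    [DecidableEq Φ] [DecidableEq D]
    (doc : D → List V) (φ : Φ → V → ℝ) (c : ℝ)
    (E E' : Finset (Φ × D)) (hsub : E ⊆ E') (a : Φ × D) :
    eldaObjHat doc φ c (insert a E') - eldaObjHat doc φ c E' ≤
      eldaObjHat doc φ c (insert a E) - eldaObjHat doc φ c E := by
  simp only [eldaObjHat, sub_sub_sub_cancel_right]
  linarith [eldaObjP_insert_add_le φ c doc hsub a]

theorem eldaHat_submodular {V D Φ : Type*} [Fintype D] [Fintype Φ]
    [DecidableEq Φ] [DecidableEq D]
    (doc : D → List V) (φ : Φ → V → ℝ) (c : ℝ)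
    (E E' : Finset (Φ × D)) (hsub : E ⊆ E') (a : Φ × D) (ha : a ∉ E') :
    eldaObjHat doc φ c (insert a E') - eldaObjHat doc φ c E' ≤
      eldaObjHat doc φ c (insert a E) - eldaObjHat doc φ c E :=
  eldaHat_submodular_general doc φ c E E' hsub a
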